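/- arXiv:0912.5000 — 3 statements merged into one kernel-verified Lean document; each statement's English description precedes it below -/
import Mathlib

section
/- The number of primitive square-zero elements of H² up to sign equals the number of indices j with α_j² = 0; precisely, the cardinality of the quotient of the set {z ∈ H² : z is primitive and z² = 0 in R_A} by the identification z ∼ −z is equal to the cardinality of the set {j ∈ {1,…,n} : α_j² = 0 in R_A}. -/
/-!
Evaluating `R_A` at points of the dual numbers `ℤ[ε]` and `ℤ[ε][ε]` shows that the `x_i` are
linearly independent and reads off the coefficients of
`(∑ c_i x_i)² = ∑_{i<j} c_j (c_j A_ij + 2 c_i) x_i x_j`, so `z = ∑ c_i x_i` squares to zero iff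
all these coefficients vanish. If `j` is the last index with `c_j ≠ 0`, then `2 c_i = -c_j A_ij`
for `i < j`: hence `j` determines `c` up to a scalar, and up to sign once `c` is primitive, and
these relations force `α_j² = 0`. Conversely, if `α_j² = 0` then `(2 x_j - α_j)² = α_j² = 0`,
and dividing `2 x_j - α_j` by the gcd of its coefficients gives a primitive square-zero element
whose last index is `j`.
-/

open MvPolynomial

noncomputable section

def alphaP (n : ℕ) (A : Fin n → Fin n → ℤ) (j : Fin n) : MvPolynomial (Fin n) ℤ :=
  ∑ i ∈ Finset.univ.filter (· < j), C (A i j) * X i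

def bottIdeal (n : ℕ) (A : Fin n → Fin n → ℤ) : Ideal (MvPolynomial (Fin n) ℤ) :=
  Ideal.span (Set.range fun j => X j ^ 2 - alphaP n A j * X j)

abbrev BottRing (n : ℕ) (A : Fin n → Fin n → ℤ) : Type :=
  MvPolynomial (Fin n) ℤ ⧸ bottIdeal n A

/-- The image x_i of X i in R_A. -/
def bx (n : ℕ) (A : Fin n → Fin n → ℤ) (i : Fin n) : BottRing n A :=
  Ideal.Quotient.mk (bottIdeal n A) (X i)

/-- The image of α_j in R_A. -/
def balpha (n : ℕ) (A : Fin n → Fin n → ℤ) (j : Fin n) : BottRing n A :=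
  Ideal.Quotient.mk (bottIdeal n A) (alphaP n A j)

/-- z is a primitive element of the degree-2 part H² of R_A. -/
def IsPrimitiveH2 (n : ℕ) (A : Fin n → Fin n → ℤ) (z : BottRing n A) : Prop :=
  ∃ c : Fin n → ℤ, Finset.univ.gcd c = 1 ∧ z = ∑ i, c i • bx n A i

open Finset DualNumber TrivSqZeroExt

lemma Finset.sq_sum_eq_sum_mul_add_two_mul {ι R : Type*} [LinearOrder ι] [CommSemiring R]
    (s : Finset ι) (f : ι → R) :
    (∑ i ∈ s, f i) ^ 2 = ∑ j ∈ s, f j * (f j + 2 * ∑ i ∈ s with i < j, f i) := by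
  induction s using Finset.induction_on_max with
  | empty => simp
  | insert a s ha ih =>
    have hnot : a ∉ s := fun h ↦ lt_irrefl a (ha a h)
    have hs : ∑ j ∈ s, f j * (f j + 2 * ∑ i ∈ insert a s with i < j, f i) =
        (∑ i ∈ s, f i) ^ 2 := by
      rw [ih]
      refine sum_congr rfl fun j hj ↦ ?_
      rw [filter_insert, if_neg (ha j hj).not_gt]
    rw [sum_insert hnot, sum_insert hnot, hs, filter_insert, if_neg (lt_irrefl a),
      filter_true_of_mem ha]
    ring

lemma Int.eq_or_eq_neg_of_mul_eq_mul {ι : Type*} [Fintype ι] {c c' : ι → ℤ} {a b : ℤ}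
    (hc : univ.gcd c = 1) (hc' : univ.gcd c' = 1) (hb : b ≠ 0)
    (h : ∀ i, a * c i = b * c' i) : c = c' ∨ c = -c' := by
  have hab : |a| = |b| := by
    rw [Int.abs_eq_normalize, Int.abs_eq_normalize]
    have := congrArg univ.gcd (funext h)
    rwa [Finset.gcd_mul_left, Finset.gcd_mul_left, hc, hc', mul_one, mul_one] at this
  rcases abs_eq_abs.mp hab with rfl | rfl
  · exact .inl (funext fun i ↦ mul_left_cancel₀ hb (h i))
  · exact .inr (funext fun i ↦ mul_left_cancel₀ hb (by
      simp only [Pi.neg_apply]; linear_combination -h i))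

section LastNonzero

variable {ι M : Type*} [Fintype ι] [LinearOrder ι] [Zero M] [DecidableEq M]

def lastNonzero (c : ι → M) (hc : c ≠ 0) : ι :=
  (univ.filter (c · ≠ 0)).max' <| by
    obtain ⟨i, hi⟩ := Function.ne_iff.1 hc
    exact ⟨i, by simpa using hi⟩

lemma lastNonzero_eq_iff {c : ι → M} (hc : c ≠ 0) {j : ι} :
    lastNonzero c hc = j ↔ c j ≠ 0 ∧ ∀ k, j < k → c k = 0 := by
  simp only [lastNonzero, max'_eq_iff, mem_filter, mem_univ, true_and]
  refine and_congr_right fun _ ↦ forall_congr' fun k ↦ ?_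
  rw [← not_imp_not, not_le, not_not]

lemma lastNonzero_spec (c : ι → M) (hc : c ≠ 0) :
    c (lastNonzero c hc) ≠ 0 ∧ ∀ k, lastNonzero c hc < k → c k = 0 :=
  (lastNonzero_eq_iff hc).1 rfl

end LastNonzero

namespace BottRing

variable {n : ℕ} (A : Fin n → Fin n → ℤ)

lemma aeval_alphaP {S : Type*} [CommRing S] (v : Fin n → S) (j : Fin n) :
    aeval v (alphaP n A j) = ∑ i ∈ univ.filter (· < j), A i j • v i := by
  simp [alphaP, zsmul_eq_mul]

def lift {S : Type*} [CommRing S] (v : Fin n → S)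
    (hv : ∀ j, v j ^ 2 = (∑ i ∈ univ.filter (· < j), A i j • v i) * v j) :
    BottRing n A →+* S :=
  Ideal.Quotient.lift _ (aeval v).toRingHom fun _ hp ↦ by
    refine (Ideal.span_le (I := RingHom.ker (aeval v).toRingHom)).mpr ?_ hp
    rintro _ ⟨j, rfl⟩
    simp [aeval_alphaP, hv j]

@[simp] lemma lift_bx {S : Type*} [CommRing S] (v : Fin n → S) (hv) (i : Fin n) :
    lift A v hv (bx n A i) = v i := by
  simp [lift, bx]

lemma bx_sq (j : Fin n) : bx n A j ^ 2 = balpha n A j * bx n A j := by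
  rw [bx, balpha, ← map_pow, ← map_mul, Ideal.Quotient.eq]
  exact Ideal.subset_span ⟨j, rfl⟩

lemma bx_mul_self (j : Fin n) : bx n A j * bx n A j =
    ∑ i ∈ univ.filter (· < j), (A i j : BottRing n A) * (bx n A i * bx n A j) := by
  rw [← sq, bx_sq, balpha, alphaP, map_sum, sum_mul]
  simp [bx, mul_assoc]

def ofCoeffs : (Fin n → ℤ) →ₗ[ℤ] BottRing n A := Fintype.linearCombination ℤ (bx n A)

lemma ofCoeffs_apply (c : Fin n → ℤ) : ofCoeffs A c = ∑ i, c i • bx n A i :=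
  Fintype.linearCombination_apply ..

def alphaCoeffs (j : Fin n) : Fin n → ℤ := fun i ↦ if i < j then A i j else 0

lemma balpha_eq_ofCoeffs (j : Fin n) : balpha n A j = ofCoeffs A (alphaCoeffs A j) := by
  simp [ofCoeffs_apply, alphaCoeffs, balpha, alphaP, bx, ite_smul, sum_ite, zsmul_eq_mul]

def toDualNumber (i : Fin n) : BottRing n A →+* ℤ[ε] :=
  lift A (Pi.single i ε) fun j ↦ by
    rcases eq_or_ne j i with rfl | hji
    · rw [sum_eq_zero fun k hk ↦ by simp [(mem_filter.1 hk).2.ne]]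
      simp [pow_two, eps_mul_eps]
    · simp [hji]

def h2Coeffs (z : BottRing n A) : Fin n → ℤ := fun i ↦ (toDualNumber A i z).snd

@[simp] lemma h2Coeffs_ofCoeffs (c : Fin n → ℤ) : h2Coeffs A (ofCoeffs A c) = c := by
  ext i
  simp [h2Coeffs, ofCoeffs_apply, toDualNumber, Pi.single_apply]

lemma h2Coeffs_neg (z : BottRing n A) : h2Coeffs A (-z) = -h2Coeffs A z := by
  ext i
  simp [h2Coeffs]

section Pair

variable {i j : Fin n}

private def e : ℤ[ε][ε] := inl ε

private lemma e_mul_e : e * e = 0 := by simp [e, ← inl_mul, eps_mul_eps]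

private lemma snd_snd_intCast_mul_e_mul_eps (m : ℤ) : ((m : ℤ[ε][ε]) * (e * ε)).snd.snd = m := by
  simp [e]

/-- `x_i ↦ s = 2e`, `x_j ↦ t = ε + A_ij e` and `x_k ↦ 0` otherwise, where `e` is the inner `ε`:
the relations hold because `s² = 0` and `t² = A_ij s t`, and `x_i x_j ↦ 2eε` detects the
coefficient of `x_i x_j`. -/
def toPair (hij : i < j) : BottRing n A →+* ℤ[ε][ε] :=
  lift A (Pi.single i (2 * e) + Pi.single j (ε + (A i j : ℤ[ε][ε]) * e)) fun k ↦ by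
    rcases eq_or_ne k j with rfl | hkj
    · rw [sum_eq_single_of_mem i (by simpa using hij) fun l hl hli ↦ by
        simp [hli, (mem_filter.1 hl).2.ne]]
      simp only [Pi.add_apply, Pi.single_eq_of_ne hij.ne, Pi.single_eq_of_ne' hij.ne,
        Pi.single_eq_same, zero_add, add_zero, zsmul_eq_mul]
      linear_combination (-(A i k : ℤ[ε][ε]) ^ 2) * e_mul_e + (eps_mul_eps (R := ℤ[ε]))
    · rcases eq_or_ne k i with rfl | hki
      · rw [sum_eq_zero fun l hl ↦ by
          simp [(mem_filter.1 hl).2.ne, ((mem_filter.1 hl).2.trans hij).ne]]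
        simp only [Pi.add_apply, Pi.single_eq_same, Pi.single_eq_of_ne hkj, add_zero, zero_mul]
        linear_combination 4 * e_mul_e
      · simp [hki, hkj]

lemma toPair_ofCoeffs (hij : i < j) (c : Fin n → ℤ) : toPair A hij (ofCoeffs A c) =
    (c i : ℤ[ε][ε]) * (2 * e) + (c j : ℤ[ε][ε]) * (ε + (A i j : ℤ[ε][ε]) * e) := by
  simp [toPair, ofCoeffs_apply, mul_add, sum_add_distrib, Pi.single_apply, zsmul_eq_mul]

lemma mul_mul_add_eq_zero_of_ofCoeffs_sq (hij : i < j) (c : Fin n → ℤ)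
    (hc : ofCoeffs A c ^ 2 = 0) : c j * (c j * A i j + 2 * c i) = 0 := by
  have h := congrArg (fun z ↦ (toPair A hij z).snd.snd) hc
  have hsq : ((c i : ℤ[ε][ε]) * (2 * e) + (c j : ℤ[ε][ε]) * (ε + (A i j : ℤ[ε][ε]) * e)) ^ 2 =
      ((2 * (c j * (c j * A i j + 2 * c i)) : ℤ) : ℤ[ε][ε]) * (e * ε) := by
    push_cast
    linear_combination ((2 * c i + A i j * c j) ^ 2 : ℤ[ε][ε]) * e_mul_e +
      ((c j) ^ 2 : ℤ[ε][ε]) * (eps_mul_eps (R := ℤ[ε]))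
  simp only [map_pow, toPair_ofCoeffs, hsq, snd_snd_intCast_mul_e_mul_eps, map_zero] at h
  simpa using h

end Pair

/-- All coefficients of `(∑ c_i x_i)² = ∑_{i<j} c_j (c_j A_ij + 2 c_i) x_i x_j` vanish. -/
def SqZeroCoeffs (c : Fin n → ℤ) : Prop :=
  ∀ i j : Fin n, i < j → c j * (c j * A i j + 2 * c i) = 0

lemma ofCoeffs_sq_eq_zero {c : Fin n → ℤ} (hc : SqZeroCoeffs A c) : ofCoeffs A c ^ 2 = 0 := by
  simp only [ofCoeffs_apply, zsmul_eq_mul, Finset.sq_sum_eq_sum_mul_add_two_mul]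
  refine sum_eq_zero fun j _ ↦ ?_
  calc (c j : BottRing n A) * bx n A j *
        (c j * bx n A j + 2 * ∑ i ∈ univ.filter (· < j), c i * bx n A i)
      = c j ^ 2 * (bx n A j * bx n A j) +
          2 * c j * bx n A j * ∑ i ∈ univ.filter (· < j), c i * bx n A i := by ring
    _ = ∑ i ∈ univ.filter (· < j),
          ((c j * (c j * A i j + 2 * c i) : ℤ) : BottRing n A) * (bx n A i * bx n A j) := by
      rw [bx_mul_self, mul_sum, mul_sum, ← sum_add_distrib]
      refine sum_congr rfl fun i _ ↦ ?_
      push_cast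
      ring
    _ = 0 := sum_eq_zero fun i hi ↦ by simp [hc i j (mem_filter.1 hi).2]

lemma ofCoeffs_sq_eq_zero_iff (c : Fin n → ℤ) : ofCoeffs A c ^ 2 = 0 ↔ SqZeroCoeffs A c :=
  ⟨fun h _ _ hij ↦ mul_mul_add_eq_zero_of_ofCoeffs_sq A hij c h, ofCoeffs_sq_eq_zero A⟩

lemma balpha_sq_eq_zero_iff (j : Fin n) :
    balpha n A j ^ 2 = 0 ↔ SqZeroCoeffs A (alphaCoeffs A j) := by
  rw [balpha_eq_ofCoeffs, ofCoeffs_sq_eq_zero_iff]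

lemma two_mul_bx_sub_balpha_sq (j : Fin n) :
    (2 * bx n A j - balpha n A j) ^ 2 = balpha n A j ^ 2 := by
  linear_combination 4 * bx_sq A j

namespace SqZeroCoeffs

variable {A} {c c' : Fin n → ℤ} {i j : Fin n}

lemma two_mul_eq (hc : SqZeroCoeffs A c) (hj : c j ≠ 0) (hij : i < j) :
    2 * c i = -(c j * A i j) := by
  have := (mul_eq_zero.1 (hc i j hij)).resolve_left hj
  linarith

lemma alphaCoeffs (hc : SqZeroCoeffs A c) (hj : c j ≠ 0) : SqZeroCoeffs A (alphaCoeffs A j) := by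
  intro i k hik
  by_cases hkj : k < j
  · -- `c_j A_kj = -2 c_k` and `c_j A_ij = -2 c_i` turn 4 times the `(i, k)` relation of `c`
    -- into `c_j²` times the one of `α_j`.
    have key : c j ^ 2 * (A k j * (A k j * A i k + 2 * A i j)) = 0 := by
      linear_combination 4 * hc i k hik + (A i k * (c j * A k j - 2 * c k) + 2 * c j * A i j) *
        hc.two_mul_eq hj hkj - 4 * c k * hc.two_mul_eq hj (hik.trans hkj)
    simpa [BottRing.alphaCoeffs, hkj, hik.trans hkj, hj] using key
  · simp [BottRing.alphaCoeffs, hkj]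

lemma of_mul {g : ℤ} (hc : SqZeroCoeffs A fun i ↦ g * c i) (hg : g ≠ 0) : SqZeroCoeffs A c :=
  fun i j hij ↦ by
    have : g ^ 2 * (c j * (c j * A i j + 2 * c i)) = 0 := by linear_combination hc i j hij
    simpa [hg] using this

lemma mul_eq_mul (hc : SqZeroCoeffs A c) (hc' : SqZeroCoeffs A c') (hj : c j ≠ 0)
    (hj' : c' j ≠ 0) (hlast : ∀ k, j < k → c k = 0) (hlast' : ∀ k, j < k → c' k = 0)
    (i : Fin n) : c' j * c i = c j * c' i := by
  rcases lt_trichotomy i j with hij | rfl | hji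
  · have : 2 * (c' j * c i) = 2 * (c j * c' i) := by
      linear_combination c' j * hc.two_mul_eq hj hij - c j * hc'.two_mul_eq hj' hij
    omega
  · ring
  · rw [hlast i hji, hlast' i hji]
    ring

end SqZeroCoeffs

lemma exists_primitive_sqZeroCoeffs {j : Fin n} (hj : balpha n A j ^ 2 = 0) :
    ∃ c : Fin n → ℤ, univ.gcd c = 1 ∧ SqZeroCoeffs A c ∧ c j ≠ 0 ∧ ∀ k, j < k → c k = 0 := by
  classical
  set d : Fin n → ℤ := 2 • Pi.single j 1 - alphaCoeffs A j
  have hd : SqZeroCoeffs A d := by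
    rw [← ofCoeffs_sq_eq_zero_iff, map_sub, map_nsmul, ← balpha_eq_ofCoeffs, ofCoeffs,
      Fintype.linearCombination_apply_single, one_smul, nsmul_eq_mul, Nat.cast_ofNat,
      two_mul_bx_sub_balpha_sq, hj]
  have hdj : d j = 2 := by simp [d, alphaCoeffs]
  have hdlast : ∀ k, j < k → d k = 0 := fun k hk ↦ by
    simp [d, alphaCoeffs, hk.ne', hk.not_gt]
  obtain ⟨c, hdc, hc⟩ := Finset.extract_gcd d ⟨j, mem_univ j⟩
  have hg : univ.gcd d ≠ 0 := fun h ↦ by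
    simpa [hdj] using gcd_eq_zero_iff.1 h j (mem_univ j)
  refine ⟨c, hc, .of_mul ?_ hg, fun h ↦ ?_, fun k hk ↦ ?_⟩
  · simpa only [← hdc _ (mem_univ _)] using hd
  · simpa [h] using (hdc j (mem_univ j)).symm.trans hdj
  · simpa [hg] using (hdc k (mem_univ k)).symm.trans (hdlast k hk)

lemma isPrimitiveH2_iff {z : BottRing n A} :
    IsPrimitiveH2 n A z ↔ univ.gcd (h2Coeffs A z) = 1 ∧ ofCoeffs A (h2Coeffs A z) = z := by
  refine ⟨?_, fun h ↦ ⟨_, h.1, by rw [← ofCoeffs_apply, h.2]⟩⟩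
  rintro ⟨c, hc, rfl⟩
  rw [← ofCoeffs_apply, h2Coeffs_ofCoeffs]
  exact ⟨hc, rfl⟩

abbrev PrimitiveSqZero : Type := {z : BottRing n A // IsPrimitiveH2 n A z ∧ z ^ 2 = 0}

namespace PrimitiveSqZero

variable {A}

lemma gcd_h2Coeffs (z : PrimitiveSqZero A) : univ.gcd (h2Coeffs A z.1) = 1 :=
  (isPrimitiveH2_iff A).1 z.2.1 |>.1

lemma ofCoeffs_h2Coeffs (z : PrimitiveSqZero A) : ofCoeffs A (h2Coeffs A z.1) = z.1 :=
  (isPrimitiveH2_iff A).1 z.2.1 |>.2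

lemma sqZeroCoeffs (z : PrimitiveSqZero A) : SqZeroCoeffs A (h2Coeffs A z.1) := by
  rw [← ofCoeffs_sq_eq_zero_iff, z.ofCoeffs_h2Coeffs]
  exact z.2.2

lemma h2Coeffs_ne_zero (z : PrimitiveSqZero A) : h2Coeffs A z.1 ≠ 0 := fun h ↦ by
  simpa [h, gcd_eq_zero_iff.2] using z.gcd_h2Coeffs

def lastIndex (z : PrimitiveSqZero A) : {j : Fin n // balpha n A j ^ 2 = 0} :=
  ⟨lastNonzero _ z.h2Coeffs_ne_zero, (balpha_sq_eq_zero_iff A _).2 <|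
    z.sqZeroCoeffs.alphaCoeffs (lastNonzero_spec _ _).1⟩

lemma lastIndex_eq_iff (z : PrimitiveSqZero A) {j : Fin n} :
    (lastIndex z).1 = j ↔ h2Coeffs A z.1 j ≠ 0 ∧ ∀ k, j < k → h2Coeffs A z.1 k = 0 :=
  lastNonzero_eq_iff z.h2Coeffs_ne_zero

lemma lastIndex_eq_lastIndex_iff (z w : PrimitiveSqZero A) :
    lastIndex z = lastIndex w ↔ z.1 = w.1 ∨ z.1 = -w.1 := by
  obtain ⟨hw, hwlast⟩ := (lastIndex_eq_iff w).1 rfl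
  rw [Subtype.ext_iff, lastIndex_eq_iff]
  constructor
  · rintro ⟨hz, hzlast⟩
    rcases Int.eq_or_eq_neg_of_mul_eq_mul z.gcd_h2Coeffs w.gcd_h2Coeffs hz
      (z.sqZeroCoeffs.mul_eq_mul w.sqZeroCoeffs hz hw hzlast hwlast) with h | h
    · exact .inl (by rw [← z.ofCoeffs_h2Coeffs, h, w.ofCoeffs_h2Coeffs])
    · exact .inr (by rw [← z.ofCoeffs_h2Coeffs, h, map_neg, w.ofCoeffs_h2Coeffs])
  · rintro (h | h) <;> rw [h]
    · exact ⟨hw, hwlast⟩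
    · simpa only [h2Coeffs_neg, Pi.neg_apply, neg_ne_zero, neg_eq_zero] using ⟨hw, hwlast⟩

lemma exists_lastIndex_eq (j : {j : Fin n // balpha n A j ^ 2 = 0}) :
    ∃ z : PrimitiveSqZero A, lastIndex z = j := by
  obtain ⟨c, hc, hsq, hj, hlast⟩ := exists_primitive_sqZeroCoeffs A j.2
  refine ⟨⟨ofCoeffs A c, ⟨c, hc, ofCoeffs_apply A c⟩, (ofCoeffs_sq_eq_zero_iff A c).2 hsq⟩, ?_⟩
  rw [Subtype.ext_iff, lastIndex_eq_iff, h2Coeffs_ofCoeffs]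
  exact ⟨hj, hlast⟩

end PrimitiveSqZero

end BottRing

open BottRing.PrimitiveSqZero

theorem card_primitive_square_zero_up_to_sign_general (n : ℕ)
    (A : Fin n → Fin n → ℤ) :
    Nat.card (Quot fun (z w : {z : BottRing n A // IsPrimitiveH2 n A z ∧ z ^ 2 = 0}) =>
        z.1 = w.1 ∨ z.1 = -w.1)
      = Nat.card {j : Fin n // balpha n A j ^ 2 = 0} := by
  refine Nat.card_eq_of_bijective
    (Quot.lift lastIndex fun z w ↦ (lastIndex_eq_lastIndex_iff z w).2) ⟨?_, fun j ↦ ?_⟩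
  · rintro ⟨z⟩ ⟨w⟩ h
    exact Quot.sound ((lastIndex_eq_lastIndex_iff z w).1 h)
  · obtain ⟨z, hz⟩ := exists_lastIndex_eq j
    exact ⟨Quot.mk _ z, hz⟩

theorem card_primitive_square_zero_up_to_sign (n : ℕ) (hn : 1 ≤ n)
    (A : Fin n → Fin n → ℤ) :
    Nat.card (Quot fun (z w : {z : BottRing n A // IsPrimitiveH2 n A z ∧ z ^ 2 = 0}) =>
        z.1 = w.1 ∨ z.1 = -w.1)
      = Nat.card {j : Fin n // balpha n A j ^ 2 = 0} :=
  card_primitive_square_zero_up_to_sign_general n A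

end
end

section
/- Let λ = (λ_1,…,λ_m) and λ' = (λ'_1,…,λ'_{m'}) be partitions of n and let φ : R_λ → R_{λ'} be a graded ring isomorphism. Then there is a bijection τ : {1,…,m} → {1,…,m'} with λ'_{τ(i)} = λ_i for all i, such that φ maps the subring of R_λ generated by x_{i,1},…,x_{i,λ_i} onto the subring of R_{λ'} generated by x_{τ(i),1},…,x_{τ(i),λ'_{τ(i)}}. -/
open MvPolynomial

noncomputable section

/-- The defining relations x_{i,1}², x_{i,j}² − x_{i,1}x_{i,j} (j ≥ 2) of R_λ. -/
def prel (m : ℕ) (lam : Fin m → ℕ) (p : Σ i : Fin m, Fin (lam i)) :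
    MvPolynomial (Σ i : Fin m, Fin (lam i)) ℤ :=
  X p ^ 2 -
    (if p.2.val = 0 then 0
      else X (⟨p.1, ⟨0, Nat.lt_of_le_of_lt (Nat.zero_le _) p.2.isLt⟩⟩ :
        Σ i : Fin m, Fin (lam i))) * X p

/-- R_λ, the integral cohomology ring of 𝓗_λ. -/
abbrev PRing (m : ℕ) (lam : Fin m → ℕ) : Type :=
  MvPolynomial (Σ i : Fin m, Fin (lam i)) ℤ ⧸ Ideal.span (Set.range (prel m lam))

/-- The image x_{i,j} of X (i,j) in R_λ. -/
def px (m : ℕ) (lam : Fin m → ℕ) (p : Σ i : Fin m, Fin (lam i)) : PRing m lam :=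
  Ideal.Quotient.mk _ (X p)

/-!
Evaluating `R_λ` in `ℤ[ε]` at `x_q ↦ ε` reads off the coefficient of `x_q` in a degree-two
element, and evaluating in `ℤ[e, f]/(e², f²)` at `x_p ↦ e`, `x_q ↦ f` reads off the coefficient
of `x_p x_q` in a product of two such elements. With these one sees that a square-zero element `u`
of `H²` is supported in a single block, and that its head coefficient there is odd unless `u` is
divisible by 2. A graded isomorphism `φ` sends `x_{i,1}` to such an element, not divisible by 2,
supported in some block `t`; every `w = φ (x_{i,j})` satisfies `w² = φ (x_{i,1}) w`, and comparing
the coefficients of `x_{t,1} x_q` forces `w` into block `t` as well. Doing the same for `φ⁻¹`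
shows that `i ↦ t` is a bijection, and comparing ranks of the block spans gives `λ'_t = λ_i`.
-/

namespace PRing

open DualNumber TrivSqZeroExt

local notation "𝔻" => DualNumber (DualNumber ℤ)

variable {m : ℕ} {lam : Fin m → ℕ}

/-- Indices are 0-based: `head ⟨i, j⟩ = ⟨i, 0⟩` stands for the generator `x_{i,1}`. -/
def head (p : Σ i : Fin m, Fin (lam i)) : Σ i : Fin m, Fin (lam i) :=
  ⟨p.1, ⟨0, Nat.lt_of_le_of_lt (Nat.zero_le _) p.2.isLt⟩⟩

lemma eq_head_iff {p q : Σ i : Fin m, Fin (lam i)} : q = head p ↔ q.1 = p.1 ∧ q.2.val = 0 := by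
  obtain ⟨i, j⟩ := p
  obtain ⟨k, l⟩ := q
  constructor
  · rintro ⟨⟩
    exact ⟨rfl, rfl⟩
  · rintro ⟨rfl, hl⟩
    exact Sigma.ext rfl (heq_of_eq (Fin.ext hl))

lemma px_mul_self_eq_ite (p : Σ i : Fin m, Fin (lam i)) :
    px m lam p * px m lam p = (if p.2.val = 0 then 0 else px m lam (head p)) * px m lam p := by
  have h : Ideal.Quotient.mk (Ideal.span (Set.range (prel m lam))) (prel m lam p) = 0 :=
    Ideal.Quotient.eq_zero_iff_mem.mpr (Ideal.subset_span ⟨p, rfl⟩)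
  rw [prel, map_sub, map_mul, map_pow, sub_eq_zero, sq, apply_ite (Ideal.Quotient.mk _),
    map_zero] at h
  exact h

lemma px_mul_self_eq_zero {p : Σ i : Fin m, Fin (lam i)} (hp : p.2.val = 0) :
    px m lam p * px m lam p = 0 := by
  rw [px_mul_self_eq_ite, if_pos hp, zero_mul]

lemma px_mul_self (p : Σ i : Fin m, Fin (lam i)) :
    px m lam p * px m lam p = px m lam (head p) * px m lam p := by
  by_cases hp : p.2.val = 0
  · rw [(eq_head_iff.mpr ⟨rfl, hp⟩ : p = head p).symm]
  · rw [px_mul_self_eq_ite, if_neg hp]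

section lift

variable {S : Type*} [CommRing S]

/-- The assignments `x_p ↦ v p` that respect the relations `prel`. -/
def Admissible (v : (Σ i : Fin m, Fin (lam i)) → S) : Prop :=
  ∀ p, v p * v p = (if p.2.val = 0 then 0 else v (head p)) * v p

def lift (v : (Σ i : Fin m, Fin (lam i)) → S) (hv : Admissible v) : PRing m lam →+* S :=
  Ideal.Quotient.lift _ (eval₂Hom (Int.castRingHom S) v) fun _ ha =>
    RingHom.mem_ker.mp <| (Ideal.span_le (I := RingHom.ker _)).mpr
      (by rintro _ ⟨p, rfl⟩; simpa [prel, sq, apply_ite, sub_eq_zero, head] using hv p) ha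

@[simp] lemma lift_px (v : (Σ i : Fin m, Fin (lam i)) → S) (hv : Admissible v)
    (p : Σ i : Fin m, Fin (lam i)) : lift v hv (px m lam p) = v p := by
  rw [lift, px, Ideal.Quotient.lift_mk, coe_eval₂Hom, eval₂_X]

lemma admissible_single (q : Σ i : Fin m, Fin (lam i)) {E : S} (hE : E * E = 0) :
    Admissible (Pi.single q E) := by
  intro p
  by_cases hp : p = q
  · subst hp
    split_ifs <;> simp [Pi.single_apply, hE]
  · simp [hp]

end lift

/-- The coefficient of `x_q`; meaningful only on `degTwo`. -/
def coord (q : Σ i : Fin m, Fin (lam i)) : PRing m lam →ₗ[ℤ] ℤ :=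
  (sndHom ℤ ℤ).comp
    (lift _ (admissible_single q (eps_mul_eps (R := ℤ)))).toIntAlgHom.toLinearMap

lemma coord_px (q p : Σ i : Fin m, Fin (lam i)) :
    coord q (px m lam p) = if p = q then 1 else 0 := by
  by_cases hp : p = q <;> simp [coord, hp]

variable (m lam) in
def degTwo : Submodule ℤ (PRing m lam) :=
  Submodule.span ℤ (Set.range (px m lam))

lemma sum_coord_smul_px {y : PRing m lam} (hy : y ∈ degTwo m lam) :
    ∑ p, coord p y • px m lam p = y := by
  obtain ⟨c, rfl⟩ := (Submodule.mem_span_range_iff_exists_fun ℤ).mp hy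
  refine Finset.sum_congr rfl fun q _ => ?_
  simp only [map_sum, map_zsmul, coord_px, smul_eq_mul, mul_ite, mul_one, mul_zero,
    Finset.sum_ite_eq', Finset.mem_univ, if_true]

lemma linearIndependent_px : LinearIndependent ℤ (px m lam) := by
  refine Fintype.linearIndependent_iff.mpr fun c hc q => ?_
  simpa only [map_sum, map_zsmul, coord_px, smul_eq_mul, mul_ite, mul_one, mul_zero,
    Finset.sum_ite_eq', Finset.mem_univ, if_true, map_zero] using congrArg (coord q) hc

lemma px_ne_two_smul (p : Σ i : Fin m, Fin (lam i)) (v : PRing m lam) :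
    px m lam p ≠ (2 : ℤ) • v := by
  intro h
  have := congrArg (coord p) h
  rw [coord_px, if_pos rfl, map_zsmul, smul_eq_mul] at this
  omega

section liftDegTwo

variable {S : Type*} [CommRing S]

lemma lift_apply_of_mem (v : (Σ i : Fin m, Fin (lam i)) → S) (hv : Admissible v)
    {y : PRing m lam} (hy : y ∈ degTwo m lam) :
    lift v hv y = ∑ p, (coord p y : S) * v p := by
  conv_lhs => rw [← sum_coord_smul_px hy]
  simp [map_sum, zsmul_eq_mul]

lemma lift_pair_apply {p q : Σ i : Fin m, Fin (lam i)} {E F : S}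
    (hv : Admissible (Pi.single p E + Pi.single q F : _ → S)) {y : PRing m lam}
    (hy : y ∈ degTwo m lam) :
    lift _ hv y = coord p y * E + coord q y * F := by
  simp [lift_apply_of_mem _ hv hy, mul_add, Finset.sum_add_distrib, Pi.single_apply]

lemma admissible_pair_of_fst_ne {p q : Σ i : Fin m, Fin (lam i)} (hpq : p.1 ≠ q.1) {E F : S}
    (hE : E * E = 0) (hF : F * F = 0) : Admissible (Pi.single p E + Pi.single q F : _ → S) := by
  have hp : p ≠ q := fun h => hpq (congrArg Sigma.fst h)
  intro r
  by_cases hrp : r = p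
  · subst hrp
    have : head r ≠ q := fun h => hpq (congrArg Sigma.fst h : (head r).1 = q.1)
    split_ifs <;> simp [Pi.single_apply, hp, this, hE]
  by_cases hrq : r = q
  · subst hrq
    have : head r ≠ p := fun h => hpq (congrArg Sigma.fst h : (head r).1 = p.1).symm
    split_ifs <;> simp [Pi.single_apply, hp.symm, this, hF]
  simp [hrp, hrq]

lemma admissible_pair_head {p : Σ i : Fin m, Fin (lam i)} (hp : p.2.val ≠ 0) {E F : S}
    (hE : E * E = F * E) (hF : F * F = 0) :
    Admissible (Pi.single p E + Pi.single (head p) F : _ → S) := by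
  have hne : p ≠ head p := fun h => hp (eq_head_iff.mp h).2
  intro r
  by_cases hrp : r = p
  · subst hrp
    simp [hp, hne, hE]
  by_cases hrq : r = head p
  · subst hrq
    have h0 : (head p).2.val = 0 := rfl
    simp [h0, hne.symm, hF]
  simp [hrp, hrq]

end liftDegTwo

/-- `𝔻 = ℤ[e, f]/(e², f²)` with `e = dualE`, `f = dualF`. -/
def dualE : 𝔻 := inl ε

def dualF : 𝔻 := ε

lemma dualE_mul_self : dualE * dualE = 0 := by simp [dualE, ← inl_mul]

lemma dualF_mul_self : dualF * dualF = 0 := eps_mul_eps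

lemma eq_zero_of_intCast_mul_dualE_mul_dualF {n : ℤ} (h : (n : 𝔻) * (dualE * dualF) = 0) :
    n = 0 := by
  simpa [dualE, dualF] using congrArg (fun x => x.snd.snd) h

section squareZero

variable {u w : PRing m lam}

lemma coord_mul_coord_eq_zero (hu : u ∈ degTwo m lam) (huu : u * u = 0)
    {p q : Σ i : Fin m, Fin (lam i)} (hpq : p.1 ≠ q.1) : coord p u * coord q u = 0 := by
  have h := congrArg (lift _ (admissible_pair_of_fst_ne hpq dualE_mul_self dualF_mul_self)) huu
  rw [map_mul, map_zero, lift_pair_apply _ hu] at h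
  have h2 := eq_zero_of_intCast_mul_dualE_mul_dualF (n := 2 * (coord p u * coord q u)) (by
    push_cast
    linear_combination h - (coord p u : 𝔻) ^ 2 * dualE_mul_self
      - (coord q u : 𝔻) ^ 2 * dualF_mul_self)
  linarith

lemma coord_mul_coord_add_two_mul_coord_head_eq_zero (hu : u ∈ degTwo m lam) (huu : u * u = 0)
    {p : Σ i : Fin m, Fin (lam i)} (hp : p.2.val ≠ 0) :
    coord p u * (coord p u + 2 * coord (head p) u) = 0 := by
  have hv := admissible_pair_head hp (E := dualE + dualF) (F := 2 * dualE)
    (by linear_combination dualF_mul_self - dualE_mul_self)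
    (by linear_combination 4 * dualE_mul_self)
  have h := congrArg (lift _ hv) huu
  rw [map_mul, map_zero, lift_pair_apply _ hu] at h
  have h2 := eq_zero_of_intCast_mul_dualE_mul_dualF
    (n := 2 * (coord p u * (coord p u + 2 * coord (head p) u))) (by
    push_cast
    linear_combination h
      - ((coord p u : 𝔻) + 2 * coord (head p) u) ^ 2 * dualE_mul_self
      - (coord p u : 𝔻) ^ 2 * dualF_mul_self)
  linarith

lemma coord_eq_zero_of_mul_self_eq_mul (hu : u ∈ degTwo m lam) (hw : w ∈ degTwo m lam)
    (huw : w * w = u * w) {p q : Σ i : Fin m, Fin (lam i)} (hodd : Odd (coord p u))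
    (hpq : p.1 ≠ q.1) (hqu : coord q u = 0) : coord q w = 0 := by
  have h := congrArg (lift _ (admissible_pair_of_fst_ne hpq dualE_mul_self dualF_mul_self)) huw
  rw [map_mul, map_mul, lift_pair_apply _ hu, lift_pair_apply _ hw, hqu] at h
  have h2 := eq_zero_of_intCast_mul_dualE_mul_dualF
    (n := coord q w * (2 * coord p w - coord p u)) (by
    push_cast
    linear_combination h - (coord p w : 𝔻) ^ 2 * dualE_mul_self
      - (coord q w : 𝔻) ^ 2 * dualF_mul_self
      + (coord p u : 𝔻) * coord p w * dualE_mul_self)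
  refine (mul_eq_zero.mp h2).resolve_right fun h0 => ?_
  obtain ⟨k, hk⟩ := hodd
  omega

end squareZero

lemma exists_odd_coord_of_mul_self_eq_zero {u : PRing m lam} (hu : u ∈ degTwo m lam)
    (huu : u * u = 0) (hprim : ∀ v, u ≠ (2 : ℤ) • v) :
    ∃ p : Σ i : Fin m, Fin (lam i), Odd (coord p u) ∧ ∀ q, q.1 ≠ p.1 → coord q u = 0 := by
  obtain ⟨p, hp⟩ : ∃ p, coord p u ≠ 0 := by
    by_contra! h
    refine hprim 0 ?_
    rw [smul_zero, ← sum_coord_smul_px hu]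
    exact Finset.sum_eq_zero fun p _ => by rw [h p, zero_smul]
  have hout : ∀ q, q.1 ≠ p.1 → coord q u = 0 := fun q hq =>
    (mul_eq_zero.mp (coord_mul_coord_eq_zero hu huu hq)).resolve_right hp
  refine ⟨head p, ?_, hout⟩
  by_contra heven
  rw [Int.not_odd_iff_even] at heven
  have hdvd : ∀ q, 2 ∣ coord q u := by
    intro q
    by_cases hq0 : q.2.val = 0
    · by_cases hq : q.1 = p.1
      · rw [eq_head_iff.mpr ⟨hq, hq0⟩]
        exact heven.two_dvd
      · rw [hout q hq]
        exact dvd_zero 2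
    · rcases mul_eq_zero.mp (coord_mul_coord_add_two_mul_coord_head_eq_zero hu huu hq0) with h | h
      · rw [h]
        exact dvd_zero 2
      · exact ⟨-coord (head q) u, by linarith⟩
  refine hprim (∑ q, (coord q u / 2) • px m lam q) ?_
  conv_lhs => rw [← sum_coord_smul_px hu]
  rw [Finset.smul_sum]
  exact Finset.sum_congr rfl fun q _ => by rw [smul_smul, Int.mul_ediv_cancel' (hdvd q)]

variable (lam) in
def blockSpan (t : Fin m) : Submodule ℤ (PRing m lam) :=
  Submodule.span ℤ (Set.range fun j : Fin (lam t) => px m lam ⟨t, j⟩)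

lemma coord_eq_zero_of_mem_blockSpan {t : Fin m} {y : PRing m lam} (hy : y ∈ blockSpan lam t)
    {q : Σ i : Fin m, Fin (lam i)} (hq : q.1 ≠ t) : coord q y = 0 := by
  refine (Submodule.span_le (p := LinearMap.ker (coord q))).mpr ?_ hy
  rintro _ ⟨j, rfl⟩
  rw [SetLike.mem_coe, LinearMap.mem_ker, coord_px, if_neg fun h => hq (congrArg Sigma.fst h).symm]

lemma mem_blockSpan_of_coord_eq_zero {y : PRing m lam} (hy : y ∈ degTwo m lam) {t : Fin m}
    (h : ∀ q : Σ i : Fin m, Fin (lam i), q.1 ≠ t → coord q y = 0) : y ∈ blockSpan lam t := by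
  rw [← sum_coord_smul_px hy, ← Finset.univ_sigma_univ, Finset.sum_sigma]
  refine Submodule.sum_mem _ fun i _ => Submodule.sum_mem _ fun j _ => ?_
  by_cases hi : i = t
  · subst hi
    exact Submodule.smul_mem _ _ (Submodule.subset_span ⟨j, rfl⟩)
  · rw [h ⟨i, j⟩ hi, zero_smul]
    exact Submodule.zero_mem _

lemma finrank_blockSpan (t : Fin m) : Module.finrank ℤ (blockSpan lam t) = lam t := by
  rw [blockSpan, finrank_span_eq_card (b := fun j : Fin (lam t) => px m lam ⟨t, j⟩)
    (linearIndependent_px.comp _ sigma_mk_injective), Fintype.card_fin]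

lemma closure_blockSpan (t : Fin m) :
    Subring.closure (blockSpan lam t : Set (PRing m lam))
      = Subring.closure (Set.range fun j : Fin (lam t) => px m lam ⟨t, j⟩) := by
  refine le_antisymm (Subring.closure_le.mpr fun y hy => ?_)
    (Subring.closure_mono Submodule.subset_span)
  refine Submodule.span_induction (fun x hx => Subring.subset_closure hx)
    (Subring.zero_mem _) (fun a b _ _ ha hb => Subring.add_mem _ ha hb)
    (fun c a _ ha => zsmul_mem ha c) hy

section iso

variable {m' : ℕ} {lam' : Fin m' → ℕ} (φ : PRing m lam ≃+* PRing m' lam')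

lemma mapsTo_blockSpan_of_px {i : Fin m} {t : Fin m'}
    (h : ∀ j, φ (px m lam ⟨i, j⟩) ∈ blockSpan lam' t) :
    Set.MapsTo φ (blockSpan lam i) (blockSpan lam' t) := fun _ hy =>
  (Submodule.span_le (p := (blockSpan lam' t).comap φ.toAddMonoidHom.toIntLinearMap)).mpr
    (Set.range_subset_iff.mpr h) hy

lemma exists_mapsTo_blockSpan (hφ : φ '' (degTwo m lam : Set (PRing m lam)) = degTwo m' lam')
    {i : Fin m} (hi : 0 < lam i) : ∃ t, Set.MapsTo φ (blockSpan lam i) (blockSpan lam' t) := by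
  have hpx : ∀ p, φ (px m lam p) ∈ degTwo m' lam' := fun p =>
    hφ.subset (Set.mem_image_of_mem φ (Submodule.subset_span ⟨p, rfl⟩))
  obtain ⟨p, hodd, hout⟩ := exists_odd_coord_of_mul_self_eq_zero (hpx ⟨i, ⟨0, hi⟩⟩)
    (by rw [← map_mul, px_mul_self_eq_zero rfl, map_zero])
    (fun v hv => px_ne_two_smul _ (φ.symm v) (by rw [← map_zsmul, ← hv, φ.symm_apply_apply]))
  refine ⟨p.1, mapsTo_blockSpan_of_px φ fun j => mem_blockSpan_of_coord_eq_zero (hpx _)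
    fun q hq => coord_eq_zero_of_mul_self_eq_mul (hpx _) (hpx _) ?_ hodd (Ne.symm hq) (hout q hq)⟩
  rw [← map_mul, ← map_mul, px_mul_self]
  rfl

lemma eq_of_mapsTo_blockSpan {i k : Fin m} {t : Fin m'} (hi : 0 < lam i)
    (h : Set.MapsTo φ (blockSpan lam i) (blockSpan lam' t))
    (h' : Set.MapsTo φ.symm (blockSpan lam' t) (blockSpan lam k)) : k = i := by
  by_contra hki
  have hx : px m lam ⟨i, ⟨0, hi⟩⟩ ∈ blockSpan lam k := by
    simpa using h' (h (Submodule.subset_span ⟨⟨0, hi⟩, rfl⟩))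
  have := coord_eq_zero_of_mem_blockSpan hx (q := ⟨i, ⟨0, hi⟩⟩) (Ne.symm hki)
  rw [coord_px, if_pos rfl] at this
  exact one_ne_zero this

lemma lam_eq_of_image_blockSpan {i : Fin m} {t : Fin m'}
    (h : φ '' (blockSpan lam i : Set (PRing m lam)) = blockSpan lam' t) : lam' t = lam i := by
  rw [← finrank_blockSpan (lam := lam) i, ← finrank_blockSpan (lam := lam') t]
  exact (LinearEquiv.ofSubmodules φ.toAddEquiv.toIntLinearEquiv _ _
    (SetLike.coe_injective (by rw [Submodule.map_coe]; exact h))).finrank_eq.symm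

lemma image_closure_of_image_blockSpan {i : Fin m} {t : Fin m'}
    (h : φ '' (blockSpan lam i : Set (PRing m lam)) = blockSpan lam' t) :
    φ '' (Subring.closure (Set.range fun j : Fin (lam i) => px m lam ⟨i, j⟩) : Set (PRing m lam))
      = Subring.closure (Set.range fun j : Fin (lam' t) => px m' lam' ⟨t, j⟩) := by
  rw [← closure_blockSpan, ← closure_blockSpan, ← h]
  exact congrArg SetLike.coe (RingHom.map_closure (φ : PRing m lam →+* PRing m' lam') _)

end iso

end PRing

open PRing

theorem graded_iso_permutes_factors_general (m m' : ℕ)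
    (lam : Fin m → ℕ) (lam' : Fin m' → ℕ)
    (hpos : ∀ i, 1 ≤ lam i)
    (hpos' : ∀ i, 1 ≤ lam' i)
    (φ : PRing m lam ≃+* PRing m' lam')
    (hφ : φ '' (Submodule.span ℤ (Set.range (px m lam)) : Set (PRing m lam))
        = (Submodule.span ℤ (Set.range (px m' lam')) : Set (PRing m' lam'))) :
    ∃ τ : Fin m ≃ Fin m',
      (∀ i, lam' (τ i) = lam i) ∧
      ∀ i, φ '' (Subring.closure
              (Set.range fun j : Fin (lam i) => px m lam ⟨i, j⟩) : Set (PRing m lam))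
          = (Subring.closure
              (Set.range fun j : Fin (lam' (τ i)) => px m' lam' ⟨τ i, j⟩) :
                Set (PRing m' lam')) := by
  have hφ' : φ.symm '' (degTwo m' lam' : Set (PRing m' lam')) = degTwo m lam := by
    rw [degTwo, ← hφ]
    exact φ.toEquiv.symm_image_image _
  choose t ht using fun i => exists_mapsTo_blockSpan φ hφ (hpos i)
  choose s hs using fun k => exists_mapsTo_blockSpan φ.symm hφ' (hpos' k)
  have hst : ∀ i, s (t i) = i := fun i => eq_of_mapsTo_blockSpan φ (hpos i) (ht i) (hs (t i))
  have hts : ∀ k, t (s k) = k := fun k =>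
    eq_of_mapsTo_blockSpan φ.symm (hpos' k) (hs k) (ht (s k))
  have himage : ∀ i, φ '' (blockSpan lam i : Set (PRing m lam)) = blockSpan lam' (t i) := by
    intro i
    have hback := hs (t i)
    rw [hst i] at hback
    exact (φ.toEquiv.bijOn' (ht i) hback).image_eq
  exact ⟨⟨t, s, hst, hts⟩, fun i => lam_eq_of_image_blockSpan φ (himage i),
    fun i => image_closure_of_image_blockSpan φ (himage i)⟩

theorem graded_iso_permutes_factors (n m m' : ℕ)
    (lam : Fin m → ℕ) (lam' : Fin m' → ℕ)
    (hpos : ∀ i, 1 ≤ lam i) (hmono : Antitone lam) (hsum : ∑ i, lam i = n)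
    (hpos' : ∀ i, 1 ≤ lam' i) (hmono' : Antitone lam') (hsum' : ∑ i, lam' i = n)
    (φ : PRing m lam ≃+* PRing m' lam')
    (hφ : φ '' (Submodule.span ℤ (Set.range (px m lam)) : Set (PRing m lam))
        = (Submodule.span ℤ (Set.range (px m' lam')) : Set (PRing m' lam'))) :
    ∃ τ : Fin m ≃ Fin m',
      (∀ i, lam' (τ i) = lam i) ∧
      ∀ i, φ '' (Subring.closure
              (Set.range fun j : Fin (lam i) => px m lam ⟨i, j⟩) : Set (PRing m lam))
          = (Subring.closure
              (Set.range fun j : Fin (lam' (τ i)) => px m' lam' ⟨τ i, j⟩) :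
                Set (PRing m' lam')) :=
  graded_iso_permutes_factors_general m m' lam lam' hpos hpos' φ hφ

end
end

section
/- Every graded ring automorphism φ of S_n permutes the 2n-element set {x_1, −x_1} ∪ {2x_j − x_1, −(2x_j − x_1) : 2 ≤ j ≤ n}; equivalently, setting e_1 = x_1 and e_j = 2x_j − x_1 for 2 ≤ j ≤ n, there exist a permutation σ of {1,…,n} and signs ε : {1,…,n} → {1,−1} such that φ(e_i) = ε(i)·e_{σ(i)} for all i. -/
/-!
In H², the elements of square zero are exactly the integer multiples of the eᵢ. This is seen
by mapping S_n to ℤ[ε₁, ε₂]/(ε₁², ε₂²), sending x₁ ↦ 2ε₁ and xⱼ ↦ ε₁ + ε₂ for j in a set T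
of indices ≥ 2 and xⱼ ↦ 0 otherwise: the square of y = ∑ aₖ xₖ becomes 2s(s + 2a₁)·ε₁ε₂ with
s = ∑_{j ∈ T} aⱼ, so s(s + 2a₁) = 0 for all such T, which forces y = c·e₁ or y = c·eⱼ.
A graded automorphism and its inverse preserve the square-zero elements of H², hence send each
eᵢ to a multiple of some eₖ. As the eᵢ are pairwise non-proportional and primitive (read off
from coordinates), composing with the inverse shows that the multiples are ±1 and the indices
are permuted.
-/

open MvPolynomial

noncomputable section

/-- The defining relations x_1², x_j² − x_1 x_j (j ≥ 2) of S_n. -/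
def srel (n : ℕ) (j : Fin n) : MvPolynomial (Fin n) ℤ :=
  X j ^ 2 -
    (if j.val = 0 then 0
      else X (⟨0, Nat.lt_of_le_of_lt (Nat.zero_le _) j.isLt⟩ : Fin n)) * X j

/-- S_n = ℤ[x_1,…,x_n]/(x_1², x_j² − x_1 x_j : j = 2,…,n). -/
abbrev SRing (n : ℕ) : Type :=
  MvPolynomial (Fin n) ℤ ⧸ Ideal.span (Set.range (srel n))

/-- The image x_i of X i in S_n. -/
def sx (n : ℕ) (i : Fin n) : SRing n :=
  Ideal.Quotient.mk _ (X i)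

/-- e_1 = x_1 and e_j = 2x_j − x_1 for j ≥ 2. -/
def se (n : ℕ) [NeZero n] (i : Fin n) : SRing n :=
  if i = 0 then sx n 0 else 2 • sx n i - sx n 0

theorem AddEquiv.exists_perm_sign_of_maps_to_multiples {ι M : Type*} [Finite ι] [AddCommGroup M]
    (e : ι → M) (he : ∀ i k (m : ℤ), e i = m • e k → i = k ∧ m = 1) (f : M ≃+ M)
    (hf : ∀ i, ∃ k, ∃ c : ℤ, f (e i) = c • e k) (hf' : ∀ i, ∃ k, ∃ c : ℤ, f.symm (e i) = c • e k) :
    ∃ (σ : Equiv.Perm ι) (ε : ι → ℤ), (∀ i, ε i = 1 ∨ ε i = -1) ∧ ∀ i, f (e i) = ε i • e (σ i) := by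
  choose τ c hc using hf
  choose ρ d hd using hf'
  have hback : ∀ i, ρ (τ i) = i ∧ c i * d (τ i) = 1 := fun i => by
    refine (he i _ _ ?_).imp Eq.symm id
    rw [← f.symm_apply_apply (e i), hc, map_zsmul, hd, smul_smul]
  have hτ : Function.Injective τ := fun i j hij => by
    rw [← (hback i).1, hij, (hback j).1]
  exact ⟨.ofBijective τ (Finite.injective_iff_bijective.mp hτ), c,
    fun i => Int.isUnit_iff.mp (.of_mul_eq_one _ (hback i).2), hc⟩

lemma eq_of_forall_subset_sum_mul_eq_zero {ι : Type*} [DecidableEq ι] {a : ι → ℤ} {i₀ : ι}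
    (h : ∀ T : Finset ι, i₀ ∉ T → (∑ k ∈ T, a k) * (∑ k ∈ T, a k + 2 * a i₀) = 0)
    {j : ι} (hj : j ≠ i₀) (haj : a j ≠ 0) : a j = -2 * a i₀ ∧ ∀ t, t ≠ i₀ → t ≠ j → a t = 0 := by
  have hsingle : ∀ t, t ≠ i₀ → a t * (a t + 2 * a i₀) = 0 := fun t ht => by
    simpa using h {t} (by simpa using ht.symm)
  have haj' : a j = -2 * a i₀ := by
    rcases mul_eq_zero.mp (hsingle j hj) with h0 | h0
    exacts [absurd h0 haj, by linarith]
  refine ⟨haj', fun t ht htj => ?_⟩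
  have hpair := h {j, t} (by simp [hj.symm, ht.symm])
  rw [Finset.sum_pair htj.symm, haj'] at hpair
  by_contra hat
  have h1 : a t + 2 * a i₀ = 0 := (mul_eq_zero.mp (hsingle t ht)).resolve_left hat
  have h2 : a t - 2 * a i₀ = 0 := by
    rcases mul_eq_zero.mp hpair with h2 | h2
    · linarith
    · exact absurd (by linarith) hat
  exact haj (by linarith)

namespace SRing

variable {n : ℕ}

lemma mk_srel (j : Fin n) : Ideal.Quotient.mk (Ideal.span (Set.range (srel n))) (srel n j) = 0 :=
  Ideal.Quotient.eq_zero_iff_mem.mpr (Ideal.subset_span ⟨j, rfl⟩)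

variable [NeZero n]

lemma srel_zero : srel n 0 = X 0 ^ 2 := by
  simp [srel]

lemma srel_of_ne_zero {j : Fin n} (hj : j ≠ 0) : srel n j = X j ^ 2 - X 0 * X j := by
  rw [srel, if_neg (Fin.val_ne_zero_iff.mpr hj)]
  congr 3

lemma sx_zero_sq : sx n 0 ^ 2 = 0 := by
  have h := mk_srel (0 : Fin n)
  rwa [srel_zero, map_pow] at h

lemma sx_sq {j : Fin n} (hj : j ≠ 0) : sx n j ^ 2 = sx n 0 * sx n j := by
  have h := mk_srel j
  rwa [srel_of_ne_zero hj, map_sub, sub_eq_zero, map_pow, map_mul] at h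

lemma se_sq (i : Fin n) : se n i ^ 2 = 0 := by
  by_cases hi : i = 0
  · simp [se, hi, sx_zero_sq]
  · rw [se, if_neg hi]
    linear_combination 4 * sx_sq hi + sx_zero_sq (n := n)

lemma se_mem_span (i : Fin n) : se n i ∈ Submodule.span ℤ (Set.range (sx n)) := by
  have hx : ∀ k : Fin n, sx n k ∈ Submodule.span ℤ (Set.range (sx n)) :=
    fun k => Submodule.subset_span ⟨k, rfl⟩
  unfold se
  split_ifs
  exacts [hx 0, sub_mem (nsmul_mem (hx i) 2) (hx 0)]

section lift

variable {R : Type*} [CommRing R] (f : Fin n → R) (h0 : f 0 ^ 2 = 0)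
  (h : ∀ j, j ≠ 0 → f j ^ 2 = f 0 * f j)

def lift : SRing n →+* R :=
  Ideal.Quotient.lift _ (aeval f).toRingHom <| by
    refine fun p hp => Submodule.span_induction ?_ (map_zero _) (fun _ _ _ _ => by simp_all)
      (fun _ _ _ _ => by simp_all) hp
    rintro _ ⟨j, rfl⟩
    by_cases hj : j = 0
    · simp [hj, srel_zero, h0]
    · simp [srel_of_ne_zero hj, h j hj]

lemma lift_sx (k : Fin n) : lift f h0 h (sx n k) = f k :=
  aeval_X f k

lemma lift_sum_zsmul_sx (a : Fin n → ℤ) : lift f h0 h (∑ k, a k • sx n k) = ∑ k, a k • f k := by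
  simp [lift_sx]

end lift

def coord (t : Fin n) : SRing n →+ ℤ :=
  (TrivSqZeroExt.sndHom ℤ ℤ).toAddMonoidHom.comp
    (lift (fun k => if k = t then (DualNumber.eps : DualNumber ℤ) else 0)
      (by split_ifs <;> simp [sq]) (fun j _ => by split_ifs <;> simp [sq])).toAddMonoidHom

lemma coord_sx (t k : Fin n) : coord t (sx n k) = if k = t then 1 else 0 := by
  simp [coord, lift_sx, apply_ite TrivSqZeroExt.snd]

lemma coord_se (t i : Fin n) :
    coord t (se n i) = if i = 0 then (if t = 0 then 1 else 0)
      else 2 * (if t = i then 1 else 0) - if t = 0 then 1 else 0 := by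
  simp only [se, apply_ite (coord t), map_sub, map_nsmul, coord_sx, eq_comm (a := t)]
  split_ifs <;> simp_all

lemma eq_of_se_eq_zsmul_se {i k : Fin n} {m : ℤ} (h : se n i = m • se n k) : i = k ∧ m = 1 := by
  have hc : ∀ t, coord t (se n i) = m * coord t (se n k) := fun t => by
    rw [h, map_zsmul, smul_eq_mul]
  rcases eq_or_ne i 0 with rfl | hi0
  · rcases eq_or_ne k 0 with rfl | hk0
    · simpa [coord_se, eq_comm] using hc 0
    · have hm : m = 0 := by simpa [coord_se, hk0, hk0.symm] using hc k
      simpa [coord_se, hm] using hc 0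
  · rcases eq_or_ne k i with rfl | hki
    · simpa [coord_se, hi0, eq_comm] using hc k
    · simpa [coord_se, hi0, hki.symm] using hc i

local notation "Λ" => DualNumber (DualNumber ℤ)
local notation "ε₁" => (TrivSqZeroExt.inl DualNumber.eps : Λ)
local notation "ε₂" => (DualNumber.eps : Λ)

lemma eps₁_sq : ε₁ ^ 2 = 0 := by
  rw [sq, ← TrivSqZeroExt.inl_mul, DualNumber.eps_mul_eps, TrivSqZeroExt.inl_zero]

lemma eps₂_sq : ε₂ ^ 2 = 0 := by
  rw [sq, DualNumber.eps_mul_eps]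

lemma eq_zero_of_zsmul_eps₁_mul_eps₂ {c : ℤ} (h : c • (ε₁ * ε₂) = 0) : c = 0 := by
  simpa using congrArg (fun x => x.snd.snd) h

-- x₁ ↦ 2ε₁ and xⱼ ↦ ε₁ + ε₂ (j ∈ T) respects the relations since (ε₁ + ε₂)² = 2ε₁ε₂ = 2ε₁(ε₁ + ε₂).
lemma subset_sum_mul_eq_zero (a : Fin n → ℤ) (ha : (∑ k, a k • sx n k) ^ 2 = 0)
    (T : Finset (Fin n)) (hT : 0 ∉ T) : (∑ k ∈ T, a k) * (∑ k ∈ T, a k + 2 * a 0) = 0 := by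
  classical
  set f : Fin n → Λ :=
    fun k => (if k = 0 then 2 * ε₁ else 0) + if k ∈ T then ε₁ + ε₂ else 0 with hf
  have hf0 : f 0 = 2 * ε₁ := by simp [hf, hT]
  have h0 : f 0 ^ 2 = 0 := by rw [hf0]; linear_combination 4 * eps₁_sq
  have hrel : ∀ j, j ≠ 0 → f j ^ 2 = f 0 * f j := fun j hj => by
    rw [hf0]
    by_cases hjT : j ∈ T
    · simp only [hf, if_neg hj, if_pos hjT, zero_add]
      linear_combination eps₂_sq - eps₁_sq
    · simp [hf, hj, hjT]
  have hsum : ∑ k, a k • f k = (2 * a 0) • ε₁ + (∑ k ∈ T, a k) • (ε₁ + ε₂) := by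
    simp only [hf, smul_add, smul_ite, zsmul_eq_mul, smul_zero, Finset.sum_add_distrib,
      Finset.sum_ite_eq', Finset.mem_univ, if_true, Finset.sum_ite_mem, Finset.univ_inter,
      Int.cast_mul, Int.cast_ofNat, Finset.sum_smul]
    ring
  set s := ∑ k ∈ T, a k
  have hsq := congrArg (lift f h0 hrel) ha
  rw [map_pow, lift_sum_zsmul_sx, hsum, map_zero] at hsq
  have hcoeff : (2 * (s * (s + 2 * a 0))) • (ε₁ * ε₂) = 0 := by
    simp only [zsmul_eq_mul] at hsq ⊢
    push_cast at hsq ⊢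
    linear_combination hsq - (2 * (a 0 : Λ) + s) ^ 2 * eps₁_sq - (s : Λ) ^ 2 * eps₂_sq
  simpa using eq_zero_of_zsmul_eps₁_mul_eps₂ hcoeff

lemma exists_eq_zsmul_se_of_sq_eq_zero {y : SRing n} (hy : y ∈ Submodule.span ℤ (Set.range (sx n)))
    (hsq : y ^ 2 = 0) : ∃ k, ∃ c : ℤ, y = c • se n k := by
  obtain ⟨a, rfl⟩ := (Submodule.mem_span_range_iff_exists_fun ℤ).mp hy
  by_cases hall : ∀ j, j ≠ 0 → a j = 0
  · refine ⟨0, a 0, ?_⟩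
    rw [Fintype.sum_eq_single 0 fun j hj => by rw [hall j hj, zero_smul]]
    simp [se]
  · simp only [not_forall] at hall
    obtain ⟨j, hj, haj⟩ := hall
    obtain ⟨haj, hother⟩ :=
      eq_of_forall_subset_sum_mul_eq_zero (subset_sum_mul_eq_zero a hsq) hj haj
    refine ⟨j, -a 0, ?_⟩
    rw [Fintype.sum_eq_add 0 j hj.symm fun t ht => by rw [hother t ht.1 ht.2, zero_smul], haj, se,
      if_neg hj]
    module

lemma exists_map_se_eq_zsmul_se (ψ : SRing n ≃+* SRing n)
    (hψ : ψ '' (Submodule.span ℤ (Set.range (sx n)) : Set (SRing n))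
      = Submodule.span ℤ (Set.range (sx n))) (i : Fin n) :
    ∃ k, ∃ c : ℤ, ψ (se n i) = c • se n k :=
  exists_eq_zsmul_se_of_sq_eq_zero
    (by rw [← SetLike.mem_coe, ← hψ]; exact Set.mem_image_of_mem ψ (se_mem_span i))
    (by rw [← map_pow, se_sq, map_zero])

end SRing

theorem graded_automorphism_permutes (n : ℕ) [NeZero n]
    (φ : SRing n ≃+* SRing n)
    (hφ : φ '' (Submodule.span ℤ (Set.range (sx n)) : Set (SRing n))
        = (Submodule.span ℤ (Set.range (sx n)) : Set (SRing n))) :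
    ∃ (σ : Equiv.Perm (Fin n)) (ε : Fin n → ℤ),
      (∀ i, ε i = 1 ∨ ε i = -1) ∧ ∀ i, φ (se n i) = ε i • se n (σ i) := by
  have hφsymm : φ.symm '' (Submodule.span ℤ (Set.range (sx n)) : Set (SRing n))
      = Submodule.span ℤ (Set.range (sx n)) := by
    conv_lhs => rw [← hφ]
    exact φ.toEquiv.symm_image_image _
  exact AddEquiv.exists_perm_sign_of_maps_to_multiples (se n)
    (fun _ _ _ => SRing.eq_of_se_eq_zsmul_se) φ.toAddEquiv
    (SRing.exists_map_se_eq_zsmul_se φ hφ) (SRing.exists_map_se_eq_zsmul_se φ.symm hφsymm)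

end
end
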